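/- arXiv:2009.14310 — 2 statements merged into one kernel-verified Lean document; each statement's English description precedes it below -/
import Mathlib

section
/- (Quantile aggregation validity for a single null hypothesis, fixed γ.) Let p^{(1)}, …, p^{(B)} be random variables, each superuniform under the null (P(p^{(b)} ≤ t) ≤ t for all t ∈ (0,1)). For fixed γ ∈ (0,1], define Q_γ = min{ q_γ(p^{(1)}/γ, …, p^{(B)}/γ), 1 } where q_γ denotes the empirical γ-quantile (the ⌈γB⌉-th smallest value). Then Q_γ is superuniform: P(Q_γ ≤ x) ≤ x for all x ∈ (0,1). -/
open MeasureTheory ProbabilityTheory Finset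

/-- The empirical `γ`-quantile of `B` numbers: their `⌈γB⌉`-th smallest value. -/
noncomputable def empQuantile (B : ℕ) (γ : ℝ) (v : Fin B → ℝ) : ℝ :=
  ((Multiset.map v Finset.univ.val).sort (· ≤ ·)).getD (⌈γ * B⌉.toNat - 1) 0

/-!
If `Q_γ ≤ x < 1`, then at least `k = ⌈γB⌉` of the `B` p-values satisfy `p⁽ᵇ⁾ ≤ γx`. By Markov's
inequality applied to the number of such indices, this event has probability at most
`(∑_b ℙ(p⁽ᵇ⁾ ≤ γx)) / k ≤ Bγx / k ≤ x`.
-/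

open scoped ENNReal

theorem List.Pairwise.succ_le_countP_of_getElem_le {α : Type*} [Preorder α] [DecidableLE α]
    {l : List α} (hl : l.Pairwise (· ≤ ·)) {i : ℕ} (hi : i < l.length) {x : α} (hx : l[i] ≤ x) :
    i + 1 ≤ l.countP (fun a => Decidable.decide (a ≤ x)) := by
  have htake : ∀ a ∈ l.take (i + 1), a ≤ x := by
    intro a ha
    obtain ⟨j, hj, rfl⟩ := List.mem_iff_getElem.mp ha
    rw [List.length_take] at hj
    rw [List.getElem_take]
    exact (hl.rel_get_of_le (a := ⟨j, by omega⟩) (b := ⟨i, hi⟩) (by simp; omega)).trans hx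
  calc i + 1 = (l.take (i + 1)).countP (fun a => Decidable.decide (a ≤ x)) := by
        rw [List.countP_eq_length.mpr (by simpa using htake), List.length_take]
        omega
    _ ≤ l.countP (fun a => Decidable.decide (a ≤ x)) := (List.take_sublist _ _).countP_le

theorem Multiset.succ_le_countP_of_sort_getElem_le {α : Type*} [LinearOrder α]
    (s : Multiset α) {i : ℕ} (hi : i < (s.sort (· ≤ ·)).length) {x : α}
    (hx : (s.sort (· ≤ ·))[i] ≤ x) : i + 1 ≤ s.countP (· ≤ x) := by
  simpa [← Multiset.coe_countP] using
    (Multiset.pairwise_sort s (· ≤ ·)).succ_le_countP_of_getElem_le hi hx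

theorem toNat_ceil_mul_mem_Icc {B : ℕ} (hB : 1 ≤ B) {γ : ℝ} (hγ : γ ∈ Set.Ioc (0 : ℝ) 1) :
    ⌈γ * B⌉.toNat ∈ Set.Icc 1 B := by
  obtain ⟨hγ0, hγ1⟩ := hγ
  have hpos : 0 < ⌈γ * B⌉ := Int.ceil_pos.mpr (by positivity)
  have hle : ⌈γ * B⌉ ≤ B := Int.ceil_le.mpr (by push_cast; nlinarith)
  constructor <;> omega

theorem le_card_filter_of_empQuantile_le {B : ℕ} (hB : 1 ≤ B) {γ : ℝ}
    (hγ : γ ∈ Set.Ioc (0 : ℝ) 1) {v : Fin B → ℝ} {x : ℝ} (h : empQuantile B γ v ≤ x) :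
    ⌈γ * B⌉.toNat ≤ #{b | v b ≤ x} := by
  obtain ⟨hk1, hkB⟩ := toNat_ceil_mul_mem_Icc hB hγ
  set s := Multiset.map v univ.val
  have hi : ⌈γ * B⌉.toNat - 1 < (s.sort (· ≤ ·)).length := by simp [s]; omega
  have hcount := s.succ_le_countP_of_sort_getElem_le hi (x := x)
    (by rwa [empQuantile, List.getD_eq_getElem _ _ hi] at h)
  rw [Multiset.countP_map] at hcount
  change _ ≤ (univ.val.filter fun b => v b ≤ x).card
  omega

open Classical in
theorem mul_measure_le_card_mem_le_sum {ι Ω : Type*} [Fintype ι] [MeasurableSpace Ω]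
    (μ : Measure Ω) (A : ι → Set Ω) (k : ℕ) :
    k * μ {ω | k ≤ #{i | ω ∈ A i}} ≤ ∑ i, μ (A i) := by
  set S := fun i => toMeasurable μ (A i)
  have hS : ∀ i, MeasurableSet (S i) := fun i => measurableSet_toMeasurable μ (A i)
  set f : Ω → ℝ≥0∞ := fun ω => ∑ i, (S i).indicator 1 ω
  have hf : Measurable f := Finset.measurable_sum _ fun i _ => measurable_one.indicator (hS i)
  have hsub : {ω | k ≤ #{i | ω ∈ A i}} ⊆ {ω | (k : ℝ≥0∞) ≤ f ω} := by
    intro ω hω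
    have hcard : #{i | ω ∈ A i} ≤ #{i | ω ∈ S i} :=
      card_le_card fun i => by simpa using fun h => subset_toMeasurable μ (A i) h
    simp only [Set.mem_ofPred_eq, f, Set.indicator_apply, Pi.one_apply, sum_boole]
    exact_mod_cast hω.trans hcard
  calc (k : ℝ≥0∞) * μ {ω | k ≤ #{i | ω ∈ A i}}
      ≤ k * μ {ω | (k : ℝ≥0∞) ≤ f ω} := by gcongr
    _ ≤ ∫⁻ ω, f ω ∂μ := mul_meas_ge_le_lintegral₀ hf.aemeasurable _
    _ = ∑ i, μ (A i) := by
      rw [lintegral_finsetSum _ fun i _ => measurable_one.indicator (hS i)]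
      exact sum_congr rfl fun i _ => by
        rw [lintegral_indicator_one (hS i), measure_toMeasurable]

/-- Quantile aggregation validity for a single null hypothesis with fixed `γ`:
if each `p⁽ᵇ⁾` is superuniform then so is
`Q_γ = min{γ-quantile of (p⁽ᵇ⁾/γ)_b, 1}`. -/
theorem quantile_aggregation_superuniform {Ω : Type*} [MeasureSpace Ω]
    [IsProbabilityMeasure (ℙ : Measure Ω)] {B : ℕ} (hB : 1 ≤ B)
    (pval : Fin B → Ω → ℝ)
    (hnull : ∀ b : Fin B, ∀ t ∈ Set.Ioo (0 : ℝ) 1,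
      ℙ {ω | pval b ω ≤ t} ≤ ENNReal.ofReal t)
    (γ : ℝ) (hγ : γ ∈ Set.Ioc (0 : ℝ) 1)
    (Q : Ω → ℝ)
    (hQ : ∀ ω, Q ω = min (empQuantile B γ (fun b => pval b ω / γ)) 1) :
    ∀ x ∈ Set.Ioo (0 : ℝ) 1, ℙ {ω | Q ω ≤ x} ≤ ENNReal.ofReal x := by
  rintro x ⟨hx0, hx1⟩
  have ⟨hγ0, hγ1⟩ := hγ
  set k := ⌈γ * B⌉.toNat
  obtain ⟨hk1, -⟩ := toNat_ceil_mul_mem_Icc hB hγ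
  set A : Fin B → Set Ω := fun b => {ω | pval b ω / γ ≤ x}
  have hsub : {ω | Q ω ≤ x} ⊆ {ω | k ≤ #{b | ω ∈ A b}} := fun ω hω => by
    have hq : empQuantile B γ (fun b => pval b ω / γ) ≤ x := by
      have := hQ ω ▸ hω.out
      exact (min_le_iff.mp this).resolve_right (by linarith)
    exact (le_card_filter_of_empQuantile_le hB hγ hq).trans_eq (by congr!)
  have hA : ∀ b, ℙ (A b) ≤ ENNReal.ofReal (γ * x) := fun b => by
    simpa only [A, div_le_iff₀ hγ0, mul_comm x γ] using
      hnull b (γ * x) ⟨by positivity, by nlinarith⟩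
  have hBk : (B : ℝ≥0∞) * ENNReal.ofReal (γ * x) ≤ k * ENNReal.ofReal x := by
    rw [← ENNReal.ofReal_natCast, ← ENNReal.ofReal_natCast, ← ENNReal.ofReal_mul (by positivity),
      ← ENNReal.ofReal_mul (by positivity)]
    refine ENNReal.ofReal_le_ofReal ?_
    have : γ * B ≤ k := by simpa only [k, Int.ceil_toNat] using Nat.le_ceil (γ * B)
    nlinarith
  refine (ENNReal.mul_le_mul_iff_right (Nat.cast_ne_zero.mpr (by omega))
    (ENNReal.natCast_ne_top k)).mp ?_
  calc (k : ℝ≥0∞) * ℙ {ω | Q ω ≤ x}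
      ≤ k * ℙ {ω | k ≤ #{b | ω ∈ A b}} := by gcongr
    _ ≤ ∑ b, ℙ (A b) := mul_measure_le_card_mem_le_sum ℙ A k
    _ ≤ ∑ _b : Fin B, ENNReal.ofReal (γ * x) := sum_le_sum fun b _ => hA b
    _ = B * ENNReal.ofReal (γ * x) := by simp
    _ ≤ k * ENNReal.ofReal x := hBk
end

section
/- (Adaptive quantile aggregation validity.) Under the assumptions above, define P* = min{ (1 − log γ_min) · inf_{γ ∈ (γ_min,1)} Q_γ, 1 } for γ_min ∈ (0,1). Then P* is superuniform: P(P* ≤ x) ≤ x for all x ∈ (0,1). -/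
/-! If `P* ≤ x`, then for every `t > x / (1 - log γmin)` some `Q_γ` with `γ > γmin` is below `t`,
so at least `k = ⌈γB⌉ ≥ ⌈γmin B⌉` of the p-values are at most `k t / B`. On this Hommel-type event
the sum `∑_b ∑_k w_k 1{p_b ≤ k t / B}` is at least `1`, for weights `w_k` whose tail sums
`∑_{j ≥ k} w_j` equal `1 / k`. Markov's inequality and superuniformity bound its probability by
`t ∑_{k ≥ ⌈γmin B⌉} k w_k ≤ t (1 + log (B / ⌈γmin B⌉)) ≤ t (1 - log γmin)`; let `t` decrease to
`x / (1 - log γmin)`. -/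

open MeasureTheory ProbabilityTheory Finset

/-- `Q_γ = min{γ-empirical-quantile of (p⁽ᵇ⁾/γ)_b, 1}`. -/
noncomputable def Qgamma (B : ℕ) (γ : ℝ) (v : Fin B → ℝ) : ℝ :=
  min (empQuantile B γ (fun b => v b / γ)) 1

open scoped ENNReal

lemma List.Pairwise.le_countP_of_getD_le {α : Type*} [LinearOrder α] {l : List α}
    (hl : l.Pairwise (· ≤ ·)) {k : ℕ} (hk : k ≤ l.length) {d t : α} (h : l.getD (k - 1) d ≤ t) :
    k ≤ l.countP (· ≤ t) := by
  rcases Nat.eq_zero_or_pos k with rfl | hk0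
  · exact Nat.zero_le _
  have hkth : l[k - 1] ≤ t := by rwa [List.getD_eq_getElem l d (by omega)] at h
  have htake : (l.take k).countP (· ≤ t) = k := by
    rw [List.countP_eq_length.mpr, List.length_take_of_le hk]
    intro a ha
    obtain ⟨i, hi, rfl⟩ := List.mem_take_iff_getElem.mp ha
    have hik : i ≤ k - 1 := by omega
    refine decide_eq_true (le_trans ?_ hkth)
    rcases hik.eq_or_lt with rfl | hlt
    · exact le_rfl
    · exact List.pairwise_iff_getElem.mp hl i (k - 1) _ _ hlt
  calc k = (l.take k).countP (· ≤ t) := htake.symm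
    _ ≤ l.countP (· ≤ t) := (List.take_sublist k l).countP_le

lemma le_card_of_empQuantile_le {B : ℕ} {γ t : ℝ} (v : Fin B → ℝ) (hγ : γ ≤ 1)
    (h : empQuantile B γ v ≤ t) : ⌈γ * B⌉₊ ≤ #{b | v b ≤ t} := by
  set l := (Multiset.map v univ.val).sort (· ≤ ·)
  have hlen : l.length = B := by simp [l]
  have hk : ⌈γ * B⌉₊ ≤ l.length :=
    hlen ▸ Nat.ceil_le.mpr (by nlinarith [(Nat.cast_nonneg B : (0 : ℝ) ≤ B)])
  calc ⌈γ * B⌉₊ ≤ l.countP (· ≤ t) :=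
        (Multiset.pairwise_sort _ _).le_countP_of_getD_le hk
          (by rwa [empQuantile, Int.ceil_toNat] at h)
    _ = #{b | v b ≤ t} := by
        rw [← Multiset.coe_countP, Multiset.sort_eq, Multiset.countP_map]
        rfl

lemma le_card_of_Qgamma_lt {B : ℕ} {γ t : ℝ} (v : Fin B → ℝ) (hγ : γ ∈ Set.Ioc 0 1)
    (ht0 : 0 ≤ t) (ht1 : t ≤ 1) (h : Qgamma B γ v < t) :
    ⌈γ * B⌉₊ ≤ #{b | v b ≤ ⌈γ * B⌉₊ / B * t} := by
  have hemp : empQuantile B γ (fun b => v b / γ) ≤ t :=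
    (min_lt_iff.mp h).resolve_right (by linarith) |>.le
  refine (le_card_of_empQuantile_le _ hγ.2 hemp).trans (card_le_card fun b => ?_)
  simp only [mem_filter, mem_univ, true_and, div_le_iff₀ hγ.1]
  intro hb
  have hγk : γ ≤ ⌈γ * B⌉₊ / B := by
    rw [le_div_iff₀ (Nat.cast_pos.mpr b.pos)]
    exact Nat.le_ceil _
  nlinarith

lemma exists_le_card_of_sInf_Qgamma_lt {B : ℕ} {γmin t : ℝ} (v : Fin B → ℝ)
    (hγmin : γmin ∈ Set.Ioo 0 1) (ht0 : 0 ≤ t) (ht1 : t ≤ 1)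
    (h : sInf {x : ℝ | ∃ γ ∈ Set.Ioo γmin 1, x = Qgamma B γ v} < t) :
    ∃ k ∈ Icc ⌈γmin * B⌉₊ B, k ≤ #{b | v b ≤ k / B * t} := by
  have hne : {x : ℝ | ∃ γ ∈ Set.Ioo γmin 1, x = Qgamma B γ v}.Nonempty :=
    ⟨_, (γmin + 1) / 2, ⟨by linarith [hγmin.2], by linarith [hγmin.2]⟩, rfl⟩
  obtain ⟨_, ⟨γ, hγ, rfl⟩, hQ⟩ := exists_lt_of_csInf_lt hne h
  have hB : (0 : ℝ) ≤ B := Nat.cast_nonneg B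
  refine ⟨⌈γ * B⌉₊, mem_Icc.mpr ⟨Nat.ceil_mono ?_, Nat.ceil_le.mpr ?_⟩,
    le_card_of_Qgamma_lt v ⟨hγmin.1.trans hγ.1, hγ.2.le⟩ ht0 ht1 hQ⟩
  · nlinarith [hγ.1]
  · nlinarith [hγ.2]

noncomputable def hommelWeight (N k : ℕ) : ℝ :=
  if k < N then (k : ℝ)⁻¹ - ((k : ℝ) + 1)⁻¹ else (N : ℝ)⁻¹

lemma hommelWeight_nonneg {N k : ℕ} (hk : 1 ≤ k) : 0 ≤ hommelWeight N k := by
  have hk' : (1 : ℝ) ≤ k := by exact_mod_cast hk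
  unfold hommelWeight
  split_ifs
  · exact sub_nonneg.mpr (inv_anti₀ (by linarith) (by linarith))
  · positivity

lemma sum_Icc_hommelWeight {N k : ℕ} (hkN : k ≤ N) :
    ∑ j ∈ Icc k N, hommelWeight N j = (k : ℝ)⁻¹ := by
  have hIco : ∑ j ∈ Ico k N, hommelWeight N j = ∑ j ∈ Ico k N, ((j : ℝ)⁻¹ - ((j : ℝ) + 1)⁻¹) :=
    sum_congr rfl fun j hj => if_pos (mem_Ico.mp hj).2
  have htele := sum_Ico_sub (fun j : ℕ => ((j : ℝ))⁻¹) hkN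
  push_cast at htele
  rw [← Ico_add_one_right_eq_Icc, sum_Ico_succ_top hkN, hIco, hommelWeight, if_neg (lt_irrefl N),
    sum_sub_distrib]
  rw [sum_sub_distrib] at htele
  linarith

lemma hommelWeight_mul_le_log {N j : ℕ} (hj : 1 ≤ j) (hjN : j < N) :
    hommelWeight N j * j ≤ Real.log (j + 1) - Real.log j := by
  have hj' : (0 : ℝ) < j := by exact_mod_cast hj
  have hlog := Real.one_sub_inv_le_log_of_pos (x := (j + 1) / j) (by positivity)
  rw [Real.log_div (by positivity) hj'.ne', inv_div] at hlog
  rw [hommelWeight, if_pos hjN]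
  convert hlog using 1
  field_simp

lemma sum_Icc_hommelWeight_mul_le {N k : ℕ} (hk : 1 ≤ k) (hkN : k ≤ N) :
    ∑ j ∈ Icc k N, hommelWeight N j * j ≤ 1 + Real.log N - Real.log k := by
  have hN : (0 : ℝ) < N := by exact_mod_cast hk.trans hkN
  have hlast : hommelWeight N N * N = 1 := by
    rw [hommelWeight, if_neg (lt_irrefl N), inv_mul_cancel₀ hN.ne']
  have htele := sum_Ico_sub (fun j : ℕ => Real.log j) hkN
  push_cast at htele
  rw [← Ico_add_one_right_eq_Icc, sum_Ico_succ_top hkN, hlast]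
  have := sum_le_sum fun j (hj : j ∈ Ico k N) =>
    hommelWeight_mul_le_log (N := N) (hk.trans (mem_Ico.mp hj).1) (mem_Ico.mp hj).2
  linarith

lemma sum_Icc_ceil_hommelWeight_mul_le {N : ℕ} (hN : 1 ≤ N) {γ : ℝ} (hγ : γ ∈ Set.Ioo 0 1) :
    ∑ j ∈ Icc ⌈γ * N⌉₊ N, hommelWeight N j * j ≤ 1 - Real.log γ := by
  have hN' : (0 : ℝ) < N := by exact_mod_cast hN
  have hγN : 0 < γ * N := mul_pos hγ.1 hN'
  have hk : 1 ≤ ⌈γ * N⌉₊ := Nat.ceil_pos.mpr hγN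
  have hlog : Real.log γ + Real.log N ≤ Real.log ⌈γ * N⌉₊ := by
    rw [← Real.log_mul hγ.1.ne' hN'.ne']
    exact Real.log_le_log hγN (Nat.le_ceil _)
  have := sum_Icc_hommelWeight_mul_le hk (Nat.ceil_le.mpr (by nlinarith [hγ.2]))
  linarith

section HommelEvent

variable {ι Ω : Type*} [Fintype ι]

open Classical in
def hommelEvent (F : ι → ℕ → Set Ω) (k₀ N : ℕ) : Set Ω :=
  {ω | ∃ k ∈ Icc k₀ N, k ≤ #{i | ω ∈ F i k}}

lemma hommelEvent_mono {F G : ι → ℕ → Set Ω} (h : ∀ i k, F i k ⊆ G i k) (k₀ N : ℕ) :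
    hommelEvent F k₀ N ⊆ hommelEvent G k₀ N := by
  classical
  rintro ω ⟨k, hk, hcard⟩
  refine ⟨k, hk, hcard.trans (card_le_card fun i hi => ?_)⟩
  simp only [mem_filter] at hi ⊢
  exact ⟨hi.1, h i k hi.2⟩

/- Each of the at least `k` indices `i` with `ω ∈ F i k` contributes the tail sum
`∑_{j ≥ k} hommelWeight N j = 1 / k`. -/
lemma one_le_sum_indicator_hommelWeight {F : ι → ℕ → Set Ω} (hF : ∀ i, Monotone (F i))
    {k₀ N : ℕ} (hk₀ : 1 ≤ k₀) {ω : Ω} (hω : ω ∈ hommelEvent F k₀ N) :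
    1 ≤ ∑ i, ∑ k ∈ Icc k₀ N, (F i k).indicator (fun _ => ENNReal.ofReal (hommelWeight N k)) ω := by
  classical
  obtain ⟨k, hk, hcard⟩ := hω
  obtain ⟨hk₀k, hkN⟩ := mem_Icc.mp hk
  have hk : 0 < k := hk₀.trans hk₀k
  have hper : ∀ i ∈ ({i | ω ∈ F i k} : Finset ι), ENNReal.ofReal (k : ℝ)⁻¹ ≤
      ∑ j ∈ Icc k₀ N, (F i j).indicator (fun _ => ENNReal.ofReal (hommelWeight N j)) ω := by
    intro i hi
    calc ENNReal.ofReal (k : ℝ)⁻¹ = ∑ j ∈ Icc k N, ENNReal.ofReal (hommelWeight N j) := by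
          rw [← ENNReal.ofReal_sum_of_nonneg fun j hj =>
              hommelWeight_nonneg (hk₀.trans (hk₀k.trans (mem_Icc.mp hj).1)),
            sum_Icc_hommelWeight hkN]
      _ = ∑ j ∈ Icc k N, (F i j).indicator (fun _ => ENNReal.ofReal (hommelWeight N j)) ω :=
          sum_congr rfl fun j hj =>
            (Set.indicator_of_mem (hF i (mem_Icc.mp hj).1 (mem_filter.mp hi).2)
              (fun _ => ENNReal.ofReal (hommelWeight N j))).symm
      _ ≤ _ := sum_le_sum_of_subset (Icc_subset_Icc_left hk₀k)
  calc (1 : ℝ≥0∞) = k * ENNReal.ofReal (k : ℝ)⁻¹ := by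
        rw [ENNReal.ofReal_inv_of_pos (by positivity), ENNReal.ofReal_natCast,
          ENNReal.mul_inv_cancel (by exact_mod_cast hk.ne') (ENNReal.natCast_ne_top k)]
    _ ≤ #{i | ω ∈ F i k} * ENNReal.ofReal (k : ℝ)⁻¹ := by gcongr
    _ = ∑ i ∈ {i | ω ∈ F i k}, ENNReal.ofReal (k : ℝ)⁻¹ := by rw [sum_const, nsmul_eq_mul]
    _ ≤ _ := (sum_le_sum hper).trans (sum_le_sum_of_subset (subset_univ _))

variable [MeasurableSpace Ω] (μ : Measure Ω)

lemma measure_hommelEvent_le_of_measurableSet {F : ι → ℕ → Set Ω} (hF : ∀ i, Monotone (F i))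
    (hmeas : ∀ i k, MeasurableSet (F i k)) {k₀ N : ℕ} (hk₀ : 1 ≤ k₀) :
    μ (hommelEvent F k₀ N) ≤
      ∑ i, ∑ k ∈ Icc k₀ N, ENNReal.ofReal (hommelWeight N k) * μ (F i k) := by
  set g : Ω → ℝ≥0∞ := fun ω =>
    ∑ i, ∑ k ∈ Icc k₀ N, (F i k).indicator (fun _ => ENNReal.ofReal (hommelWeight N k)) ω
  have hmeas_ind : ∀ i k, Measurable
      ((F i k).indicator (fun _ => ENNReal.ofReal (hommelWeight N k))) :=
    fun i k => measurable_const.indicator (hmeas i k)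
  have hg : Measurable g :=
    Finset.measurable_sum _ fun i _ => Finset.measurable_sum _ fun k _ => hmeas_ind i k
  calc μ (hommelEvent F k₀ N) ≤ μ {ω | 1 ≤ g ω} :=
        measure_mono fun ω hω => one_le_sum_indicator_hommelWeight hF hk₀ hω
    _ ≤ ∫⁻ ω, g ω ∂μ := by simpa using mul_meas_ge_le_lintegral hg 1
    _ = _ := by
        simp only [g]
        rw [lintegral_finsetSum _ fun i _ => Finset.measurable_sum _ fun k _ => hmeas_ind i k]
        refine sum_congr rfl fun i _ => ?_
        rw [lintegral_finsetSum _ fun k _ => hmeas_ind i k]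
        exact sum_congr rfl fun k _ => lintegral_indicator_const (hmeas i k) _

/- The sets `F i k` need not be measurable (`μ` is then an outer measure); their measurable hulls,
intersected over `j ∈ [k, N]` to stay monotone in `k`, reduce this to the measurable case. -/
lemma measure_hommelEvent_le {F : ι → ℕ → Set Ω} (hF : ∀ i, Monotone (F i)) {k₀ N : ℕ}
    (hk₀ : 1 ≤ k₀) :
    μ (hommelEvent F k₀ N) ≤
      ∑ i, ∑ k ∈ Icc k₀ N, ENNReal.ofReal (hommelWeight N k) * μ (F i k) := by
  set G : ι → ℕ → Set Ω := fun i k => ⋂ j ∈ Icc k N, toMeasurable μ (F i j)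
  have hFG : ∀ i k, F i k ⊆ G i k := fun i k =>
    Set.subset_iInter₂ fun j hj => (hF i (mem_Icc.mp hj).1).trans (subset_toMeasurable _ _)
  have hG : ∀ i, Monotone (G i) := fun i k k' hkk' =>
    Set.biInter_subset_biInter_left fun j hj => Icc_subset_Icc_left hkk' hj
  have hGmeas : ∀ i k, MeasurableSet (G i k) := fun i k =>
    Finset.measurableSet_biInter _ fun j _ => measurableSet_toMeasurable _ _
  have hμG : ∀ i, ∀ k ∈ Icc k₀ N, μ (G i k) ≤ μ (F i k) := fun i k hk =>
    (measure_mono (Set.biInter_subset_of_mem (left_mem_Icc.mpr (mem_Icc.mp hk).2))).trans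
      (measure_toMeasurable _).le
  calc μ (hommelEvent F k₀ N) ≤ μ (hommelEvent G k₀ N) := measure_mono (hommelEvent_mono hFG _ _)
    _ ≤ ∑ i, ∑ k ∈ Icc k₀ N, ENNReal.ofReal (hommelWeight N k) * μ (G i k) :=
        measure_hommelEvent_le_of_measurableSet μ hG hGmeas hk₀
    _ ≤ _ := sum_le_sum fun i _ => sum_le_sum fun k hk => mul_le_mul_right (hμG i k hk) _

end HommelEvent

lemma measure_sInf_Qgamma_lt_le {Ω : Type*} [MeasurableSpace Ω] (μ : Measure Ω) {B : ℕ}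
    (hB : 1 ≤ B) (pval : Fin B → Ω → ℝ)
    (hnull : ∀ b, ∀ t ∈ Set.Ioo (0 : ℝ) 1, μ {ω | pval b ω ≤ t} ≤ ENNReal.ofReal t)
    {γmin : ℝ} (hγmin : γmin ∈ Set.Ioo 0 1) {t : ℝ} (ht : t ∈ Set.Ioo 0 1) :
    μ {ω | sInf {x : ℝ | ∃ γ ∈ Set.Ioo γmin 1, x = Qgamma B γ (fun b => pval b ω)} < t} ≤
      ENNReal.ofReal ((1 - Real.log γmin) * t) := by
  have hB' : (0 : ℝ) < B := by exact_mod_cast hB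
  set k₀ := ⌈γmin * B⌉₊
  have hk₀ : 1 ≤ k₀ := Nat.ceil_pos.mpr (mul_pos hγmin.1 hB')
  set F : Fin B → ℕ → Set Ω := fun b k => {ω | pval b ω ≤ k / B * t}
  have hF : ∀ b, Monotone (F b) := fun b k k' hkk' ω hω =>
    le_trans (b := k / B * t) hω (by gcongr; exact ht.1.le)
  have hμF : ∀ b, ∀ k ∈ Icc k₀ B, μ (F b k) ≤ ENNReal.ofReal (k / B * t) := by
    intro b k hk
    have hk' : (1 : ℝ) ≤ k := by exact_mod_cast hk₀.trans (mem_Icc.mp hk).1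
    have hkB : (k : ℝ) / B ≤ 1 := (div_le_one hB').mpr (by exact_mod_cast (mem_Icc.mp hk).2)
    exact hnull b _ ⟨by positivity [ht.1], (mul_le_of_le_one_left ht.1.le hkB).trans_lt ht.2⟩
  have hterm_nonneg : ∀ k ∈ Icc k₀ B, 0 ≤ hommelWeight B k * (k / B * t) := fun k hk =>
    mul_nonneg (hommelWeight_nonneg (hk₀.trans (mem_Icc.mp hk).1)) (by positivity [ht.1.le])
  have hsum : ∑ _b : Fin B, ∑ k ∈ Icc k₀ B, hommelWeight B k * (k / B * t) ≤
      (1 - Real.log γmin) * t := by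
    have h := sum_Icc_ceil_hommelWeight_mul_le hB hγmin
    calc ∑ _b : Fin B, ∑ k ∈ Icc k₀ B, hommelWeight B k * (k / B * t)
        = t * ∑ k ∈ Icc k₀ B, hommelWeight B k * k := by
          rw [sum_const, card_univ, Fintype.card_fin, nsmul_eq_mul, mul_sum, mul_sum]
          refine sum_congr rfl fun k _ => ?_
          field_simp
      _ ≤ (1 - Real.log γmin) * t := by rw [mul_comm]; gcongr; exact ht.1.le
  calc μ {ω | sInf {x : ℝ | ∃ γ ∈ Set.Ioo γmin 1, x = Qgamma B γ (fun b => pval b ω)} < t}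
      ≤ μ (hommelEvent F k₀ B) := measure_mono fun ω hω => by
        obtain ⟨k, hk, hcard⟩ := exists_le_card_of_sInf_Qgamma_lt _ hγmin ht.1.le ht.2.le hω
        exact ⟨k, hk, by convert hcard using 4; rfl⟩
    _ ≤ ∑ b, ∑ k ∈ Icc k₀ B, ENNReal.ofReal (hommelWeight B k) * μ (F b k) :=
        measure_hommelEvent_le μ hF hk₀
    _ ≤ ∑ _b : Fin B, ∑ k ∈ Icc k₀ B, ENNReal.ofReal (hommelWeight B k * (k / B * t)) :=
        sum_le_sum fun b _ => sum_le_sum fun k hk => by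
          rw [ENNReal.ofReal_mul (hommelWeight_nonneg (hk₀.trans (mem_Icc.mp hk).1))]
          exact mul_le_mul_right (hμF b k hk) _
    _ = ENNReal.ofReal (∑ _b : Fin B, ∑ k ∈ Icc k₀ B, hommelWeight B k * (k / B * t)) := by
        rw [ENNReal.ofReal_sum_of_nonneg fun _ _ => sum_nonneg hterm_nonneg]
        exact sum_congr rfl fun _ _ => (ENNReal.ofReal_sum_of_nonneg hterm_nonneg).symm
    _ ≤ ENNReal.ofReal ((1 - Real.log γmin) * t) := ENNReal.ofReal_le_ofReal hsum

lemma ENNReal.le_ofReal_of_forall_mem_Ioo_le {a : ℝ≥0∞} {x y : ℝ} (hxy : x < y)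
    (h : ∀ s ∈ Set.Ioo x y, a ≤ ENNReal.ofReal s) : a ≤ ENNReal.ofReal x :=
  ge_of_tendsto (ENNReal.continuous_ofReal.tendsto x |>.mono_left nhdsWithin_le_nhds)
    (Filter.eventually_of_mem (Ioo_mem_nhdsGT hxy) h)

theorem adaptive_quantile_aggregation_superuniform_general {Ω : Type*} [MeasureSpace Ω]
    {B : ℕ} (hB : 1 ≤ B)
    (pval : Fin B → Ω → ℝ)
    (hnull : ∀ b : Fin B, ∀ t ∈ Set.Ioo (0 : ℝ) 1,
      ℙ {ω | pval b ω ≤ t} ≤ ENNReal.ofReal t)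
    (γmin : ℝ) (hγmin : γmin ∈ Set.Ioo (0 : ℝ) 1)
    (Pstar : Ω → ℝ)
    (hPstar : ∀ ω, Pstar ω =
      min ((1 - Real.log γmin) *
        sInf {x : ℝ | ∃ γ ∈ Set.Ioo γmin 1, x = Qgamma B γ (fun b => pval b ω)}) 1) :
    ∀ x ∈ Set.Ioo (0 : ℝ) 1, ℙ {ω | Pstar ω ≤ x} ≤ ENNReal.ofReal x := by
  rintro x ⟨hx0, hx1⟩
  set c := 1 - Real.log γmin
  have hc : 1 < c := by linarith [Real.log_neg hγmin.1 hγmin.2]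
  refine ENNReal.le_ofReal_of_forall_mem_Ioo_le hx1 fun s hs => ?_
  have hsc : s / c ∈ Set.Ioo 0 1 :=
    ⟨div_pos (hx0.trans hs.1) (by linarith), (div_lt_one (by linarith)).mpr (by linarith [hs.2])⟩
  calc ℙ {ω | Pstar ω ≤ x}
      ≤ ℙ {ω | sInf {x : ℝ | ∃ γ ∈ Set.Ioo γmin 1, x = Qgamma B γ (fun b => pval b ω)} < s / c} :=
        measure_mono fun ω (hω : Pstar ω ≤ x) => by
          rw [hPstar, min_le_iff, or_iff_left (by linarith)] at hω
          rw [Set.mem_ofPred_eq, lt_div_iff₀ (by linarith)]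
          linarith [hs.1]
    _ ≤ ENNReal.ofReal (c * (s / c)) := measure_sInf_Qgamma_lt_le ℙ hB pval hnull hγmin hsc
    _ = ENNReal.ofReal s := by rw [mul_div_cancel₀ _ (by linarith)]

/-- Adaptive quantile aggregation validity: if each `p⁽ᵇ⁾` is superuniform under the null,
then `P* = min{(1 - log γ_min) · inf_{γ ∈ (γ_min,1)} Q_γ, 1}` is superuniform. -/
theorem adaptive_quantile_aggregation_superuniform {Ω : Type*} [MeasureSpace Ω]
    [IsProbabilityMeasure (ℙ : Measure Ω)] {B : ℕ} (hB : 1 ≤ B)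
    (pval : Fin B → Ω → ℝ)
    (hnull : ∀ b : Fin B, ∀ t ∈ Set.Ioo (0 : ℝ) 1,
      ℙ {ω | pval b ω ≤ t} ≤ ENNReal.ofReal t)
    (γmin : ℝ) (hγmin : γmin ∈ Set.Ioo (0 : ℝ) 1)
    (Pstar : Ω → ℝ)
    (hPstar : ∀ ω, Pstar ω =
      min ((1 - Real.log γmin) *
        sInf {x : ℝ | ∃ γ ∈ Set.Ioo γmin 1, x = Qgamma B γ (fun b => pval b ω)}) 1) :
    ∀ x ∈ Set.Ioo (0 : ℝ) 1, ℙ {ω | Pstar ω ≤ x} ≤ ENNReal.ofReal x :=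
  adaptive_quantile_aggregation_superuniform_general hB pval hnull γmin hγmin Pstar hPstar
end
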